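/- arXiv:math/0008015 — 2 statements merged into one kernel-verified Lean document; each statement's English description precedes it below -/
import Mathlib

section
/- Let G(z) = z^2 and Q = (θ/z) dz^2 with θ ∈ ℂ, and r dz^2 = S(G)/2 + Q. The indicial equation of u'' + r u = 0 at z = 0 has roots 3/2 and -1/2, and the log-term coefficient at z = 0 vanishes if and only if θ = 0. Hence there is no such equation with θ ≠ 0 and vanishing log-term (corresponding to nonexistence of CMC-1 surfaces of type O(-1,-3) with dual total curvature 8π). -/
/-- The Schwarzian derivative S(f) = (f''/f')' - (1/2)(f''/f')². -/
noncomputable def schwarzian (f : ℂ → ℂ) (z : ℂ) : ℂ :=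
  deriv (fun w => deriv (deriv f) w / deriv f w) z
    - (1 / 2) * (deriv (deriv f) z / deriv f z) ^ 2

lemma deriv_sq : deriv (fun w : ℂ => w ^ 2) = fun w => 2 * w := by
  funext w
  simp [deriv_pow]

lemma schwarzian_sq (z : ℂ) (hz : z ≠ 0) :
    schwarzian (fun w => w ^ 2) z = -3 / (2 * z ^ 2) := by
  unfold schwarzian
  rw [deriv_sq]
  have h2 : deriv (fun w : ℂ => 2 * w) = fun _ => (2 : ℂ) := by
    funext w
    rw [deriv_const_mul_field]; simp
  rw [h2]
  have hfun : (fun w : ℂ => (2 : ℂ) / (2 * w)) = fun w => w⁻¹ := by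
    funext w
    rcases eq_or_ne w 0 with h | h
    · simp [h]
    · field_simp
  rw [hfun, deriv_inv]
  field_simp
  ring

/-- For G = z², Q = (θ/z) dz², r = S(G)/2 + Q: the indicial equation of
u'' + r u = 0 at z = 0 has roots 3/2 and -1/2, with expansion z²r(z) = -3/4 + θz + z²h(z),
and the log-term coefficient at z = 0 (criterion q₂ + q₁² = 0 for m = 2) vanishes iff
θ = 0.  Hence no such equation with θ ≠ 0 has vanishing log-term (nonexistence of CMC-1
surfaces of type O(-1,-3) with dual total curvature 8π). -/
theorem type_O13_nonexistence (θ : ℂ)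
    (r : ℂ → ℂ)
    (hr : ∀ z : ℂ, z ≠ 0 →
      r z = schwarzian (fun w => w ^ 2) z / 2 + θ / z) :
    ((3 / 2 : ℂ) * (3 / 2 - 1) + (-3 / 4) = 0 ∧
     (-1 / 2 : ℂ) * (-1 / 2 - 1) + (-3 / 4) = 0) ∧
    (∃ h : ℂ → ℂ, AnalyticAt ℂ h 0 ∧
      (∀ᶠ z in nhdsWithin (0 : ℂ) {(0 : ℂ)}ᶜ,
        z ^ 2 * r z = -3 / 4 + θ * z + z ^ 2 * h z) ∧
      ((h 0 + θ ^ 2 = 0) ↔ θ = 0) ∧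
      ¬(θ ≠ 0 ∧ h 0 + θ ^ 2 = 0)) := by
  refine ⟨⟨by ring, by ring⟩, fun _ => 0, analyticAt_const, ?_, ?_, ?_⟩
  · filter_upwards [self_mem_nhdsWithin] with z hz
    have hz' : z ≠ 0 := hz
    rw [hr z hz', schwarzian_sq z hz']
    have h2 : z ^ 2 ≠ 0 := pow_ne_zero _ hz'
    field_simp
    ring
  · simp [pow_eq_zero_iff]
  · rintro ⟨hθ, h0⟩
    simp [pow_eq_zero_iff] at h0
    exact hθ h0
end

section
/- For the ODE (z-1)^2 X'' + 2(z-1) X' + θ(1 + (z-1)) X = 0 with θ ≠ 0, if the indicial roots at z = 1 differ by a positive integer m, then the log-term coefficient equals c = -θ^m/(m!(m-1)!), which is nonzero. Hence no solution basis free of logarithms exists at z = 1. -/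
/-!
Since `p` vanishes beyond order `0` and `q` beyond order `1`, every Frobenius sum collapses to
its last term `q 1 * a (j - 1)`. The recursion then becomes the two-term recurrence
`a (j + 1) = θ a j / ((j + 1)(m - 1 - j))`, solved by
`a j = θ ^ j / (j! · (m - 1)! / (m - 1 - j)!)`, so that
`a (m - 1) = θ ^ (m - 1) / (m - 1)!²` and `c = -θ a (m - 1) / m = -θ ^ m / (m! (m - 1)!)`.
-/

open Finset Nat

theorem frobenius_sum_eq_of_vanishing {R : Type*} [Semiring R] (lam : R) {p q : ℕ → R}
    (a : ℕ → R) (hp : ∀ j, 1 ≤ j → p j = 0) (hq : ∀ j, 2 ≤ j → q j = 0) {j : ℕ} (hj : 1 ≤ j) :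
    ∑ k ∈ range j, ((lam + (k : R)) * p (j - k) + q (j - k)) * a k = q 1 * a (j - 1) := by
  rw [sum_eq_single_of_mem (j - 1) (mem_range.mpr (by omega))]
  · rw [show j - (j - 1) = 1 by omega, hp 1 le_rfl, mul_zero, zero_add]
  · intro k hk hne
    have hk' := mem_range.mp hk
    rw [hp _ (by omega), hq _ (by omega), mul_zero, add_zero, zero_mul]

theorem eq_pow_div_factorial_mul_descFactorial {K : Type*} [Field K] [CharZero K] (θ : K)
    (n : ℕ) {a : ℕ → K} (h0 : a 0 = 1)
    (hsucc : ∀ j < n, a (j + 1) = θ * a j / ((j + 1) * (n - j))) :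
    ∀ j ≤ n, a j = θ ^ j / (j ! * n.descFactorial j) := by
  intro j
  induction j with
  | zero => simp [h0]
  | succ j ih =>
    intro hj
    have hnj : (n : K) - j ≠ 0 := sub_ne_zero.mpr (by exact_mod_cast (by omega : n ≠ j))
    have hdesc : (n.descFactorial j : K) ≠ 0 :=
      Nat.cast_ne_zero.mpr (Nat.descFactorial_eq_zero_iff_lt.not.mpr (by omega))
    rw [hsucc j hj, ih (by omega), factorial_succ, descFactorial_succ,
      Nat.cast_mul, Nat.cast_mul, Nat.cast_sub (by omega)]
    field_simp
    push_cast
    ring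

theorem type_O23_mu0_no_logfree_general (θ : ℂ) (hθ : θ ≠ 0) (m : ℕ) (hm : 1 ≤ m)
    (p q : ℕ → ℂ) (lam2 : ℂ)
    (hp : ∀ j, 1 ≤ j → p j = 0)
    (hq1 : q 1 = θ) (hq : ∀ j, 2 ≤ j → q j = 0)
    (a : ℕ → ℂ) (ha0 : a 0 = 1)
    (ha : ∀ j, 1 ≤ j → j ≤ m - 1 →
      a j = (1 / ((j : ℂ) * ((m : ℂ) - (j : ℂ)))) *
        ∑ k ∈ Finset.range j, ((lam2 + (k : ℂ)) * p (j - k) + q (j - k)) * a k)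
    (c : ℂ)
    (hc : c = -(1 / (m : ℂ)) *
      ∑ k ∈ Finset.range m, ((lam2 + (k : ℂ)) * p (m - k) + q (m - k)) * a k) :
    c = -θ ^ m / ((m.factorial : ℂ) * ((m - 1).factorial : ℂ)) ∧ c ≠ 0 := by
  obtain ⟨n, rfl⟩ : ∃ n, m = n + 1 := ⟨m - 1, by omega⟩
  have hsum : ∀ j, 1 ≤ j →
      ∑ k ∈ range j, ((lam2 + (k : ℂ)) * p (j - k) + q (j - k)) * a k = θ * a (j - 1) :=
    fun j hj => by rw [frobenius_sum_eq_of_vanishing lam2 a hp hq hj, hq1]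
  have hrec : ∀ j < n, a (j + 1) = θ * a j / ((j + 1) * (n - j)) := fun j hj => by
    rw [ha (j + 1) (by omega) (by omega), hsum (j + 1) (by omega)]
    push_cast
    ring
  have han : a n = θ ^ n / (n ! * n !) := by
    rw [eq_pow_div_factorial_mul_descFactorial θ n ha0 hrec n le_rfl, descFactorial_self]
  have hcval : c = -θ ^ (n + 1) / ((n + 1)! * n !) := by
    rw [hc, hsum (n + 1) (by omega), Nat.add_sub_cancel, han, factorial_succ]
    push_cast
    field_simp
    ring
  refine ⟨hcval, ?_⟩
  rw [hcval]
  exact div_ne_zero (neg_ne_zero.mpr (pow_ne_zero _ hθ))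
    (mul_ne_zero (Nat.cast_ne_zero.mpr (factorial_ne_zero _))
      (Nat.cast_ne_zero.mpr (factorial_ne_zero _)))

/-- For the ODE (z-1)²X'' + 2(z-1)X' + θ(1+(z-1))X = 0 (θ ≠ 0), i.e.
in w = z-1: p₀ = 2, q₀ = q₁ = θ, all other coefficients zero: if the roots of the
indicial equation t(t-1) + 2t + θ = 0 differ by a positive integer m, then the
log-term coefficient c = -θ^m/(m!(m-1)!) ≠ 0, so no log-free solution basis exists. -/
theorem type_O23_mu0_no_logfree (θ : ℂ) (hθ : θ ≠ 0) (m : ℕ) (hm : 1 ≤ m)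
    (hm2 : ((m : ℂ)) ^ 2 = 1 - 4 * θ)
    (p q : ℕ → ℂ) (lam2 : ℂ)
    (hp0 : p 0 = 2) (hp : ∀ j, 1 ≤ j → p j = 0)
    (hq0 : q 0 = θ) (hq1 : q 1 = θ) (hq : ∀ j, 2 ≤ j → q j = 0)
    (hlam2 : lam2 = ((1 - p 0) - (m : ℂ)) / 2)
    (hroot : lam2 * (lam2 - 1) + 2 * lam2 + θ = 0)
    (a : ℕ → ℂ) (ha0 : a 0 = 1)
    (ha : ∀ j, 1 ≤ j → j ≤ m - 1 →
      a j = (1 / ((j : ℂ) * ((m : ℂ) - (j : ℂ)))) *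
        ∑ k ∈ Finset.range j, ((lam2 + (k : ℂ)) * p (j - k) + q (j - k)) * a k)
    (c : ℂ)
    (hc : c = -(1 / (m : ℂ)) *
      ∑ k ∈ Finset.range m, ((lam2 + (k : ℂ)) * p (m - k) + q (m - k)) * a k) :
    c = -θ ^ m / ((m.factorial : ℂ) * ((m - 1).factorial : ℂ)) ∧ c ≠ 0 :=
  type_O23_mu0_no_logfree_general θ hθ m hm p q lam2 hp hq1 hq a ha0 ha c hc
end
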